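/- For every ε > 0 there exist r₀ ∈ ℕ and δ > 0 such that: every finite Eulerian set M ⊆ 𝔽₂ⁿ \ {0} with rank(M) ≥ r₀ and |M| ≥ 2^{(1−δ)·rank(M)} can be partitioned into at most (2 + ε)·|M|/(rank(M) + 1) circuits. -/

import Mathlib

open Finset

/-- A circuit: a minimal nonempty subset of the ambient group minus `{0}` with zero sum. -/
def IsCircuit {V : Type*} [AddCommGroup V] [DecidableEq V] (C : Finset V) : Prop :=
  C.Nonempty ∧ (0 : V) ∉ C ∧ ∑ x ∈ C, x = 0 ∧
    ∀ D ⊆ C, D.Nonempty → ∑ x ∈ D, x = 0 → D = C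
/-- rank: maximum size of a linearly independent subset of `M`. -/
noncomputable def rk {n : ℕ} (M : Finset (Fin n → ZMod 2)) : ℕ :=
  sSup {k : ℕ | ∃ s ⊆ M, s.card = k ∧
    LinearIndependent (ZMod 2) (fun x : s => (x : Fin n → ZMod 2))}
/-- `𝒞` is a partition of `M` into pairwise disjoint circuits. -/
def IsCircuitPartition {V : Type*} [AddCommGroup V] [DecidableEq V]
    (M : Finset V) (𝒞 : Finset (Finset V)) : Prop :=
  (∀ C ∈ 𝒞, IsCircuit C) ∧
  (∀ C ∈ 𝒞, ∀ D ∈ 𝒞, C ≠ D → Disjoint C D) ∧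
  𝒞.biUnion id = M

/-!
Let `B` be a basis of `M` and `r = |B|`. Every `x ∈ M` is the sum of a unique subset `S ⊆ B`, and
when `|S| ≥ 2` the set `insert x S` is a circuit. So while more than `∑_{i ≤ m} C(r, i)` elements
are left, a circuit with at least `m + 2` elements can be removed (the rest stays Eulerian), and
the remainder is split into arbitrary circuits: at most `|M| / (m + 2) + ∑_{i ≤ m} C(r, i)`
circuits in all. Take `m = ⌊(1/2 - γ) r⌋` with `(2 + ε/2)(1/2 - γ) ≥ 1`. The Chernoff bound
`∑_{i ≤ m} C(r, i) ≤ (1 + x)^r / x^m` at `x = 1 - 2γ` gives `∑_{i ≤ m} C(r, i) ≤ 2^{(1 - γ²/4) r}`,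
which is at most `(ε/2)|M| / (r + 1)` once `|M| ≥ 2^{(1 - γ²/8) r}` and `r` is large.
-/

section Circuits

variable {V : Type*} [AddCommGroup V] [DecidableEq V]

theorem exists_isCircuit_subset {A : Finset V} (h0 : (0 : V) ∉ A) (hne : A.Nonempty)
    (hA : ∑ x ∈ A, x = 0) : ∃ C ⊆ A, IsCircuit C := by
  obtain ⟨C, hC, hmin⟩ := (A.powerset.filter fun C => C.Nonempty ∧ ∑ x ∈ C, x = 0).exists_min_image
    card ⟨A, mem_filter.2 ⟨mem_powerset_self A, hne, hA⟩⟩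
  obtain ⟨hCA, hCne, hC0⟩ := by simpa only [mem_filter, mem_powerset] using hC
  refine ⟨C, hCA, hCne, fun h => h0 (hCA h), hC0, fun D hDC hDne hD0 => ?_⟩
  exact eq_of_subset_of_card_le hDC
    (hmin D (mem_filter.2 ⟨mem_powerset.2 (hDC.trans hCA), hDne, hD0⟩))

theorem IsCircuit.sum_sdiff {A C : Finset V} (hC : IsCircuit C) (hCA : C ⊆ A) :
    ∑ x ∈ A \ C, x = ∑ x ∈ A, x := by
  rw [sum_sdiff_eq_sub hCA, hC.2.2.1, sub_zero]

theorem IsCircuitPartition.subset {A D : Finset V} {𝒞 : Finset (Finset V)}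
    (h : IsCircuitPartition A 𝒞) (hD : D ∈ 𝒞) : D ⊆ A :=
  h.2.2 ▸ subset_biUnion_of_mem id hD

theorem IsCircuitPartition.card_le {A : Finset V} {𝒞 : Finset (Finset V)}
    (h : IsCircuitPartition A 𝒞) : 𝒞.card ≤ A.card :=
  h.2.2 ▸ card_le_card_biUnion (fun C hC D hD hCD => h.2.1 C hC D hD hCD) fun C hC => (h.1 C hC).1

theorem IsCircuitPartition.insert_sdiff {A C : Finset V} {𝒞 : Finset (Finset V)}
    (hC : IsCircuit C) (hCA : C ⊆ A) (h : IsCircuitPartition (A \ C) 𝒞) :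
    IsCircuitPartition A (insert C 𝒞) ∧ (insert C 𝒞).card = 𝒞.card + 1 := by
  have hdisj : ∀ D ∈ 𝒞, Disjoint C D := fun D hD => disjoint_sdiff.mono_right (h.subset hD)
  refine ⟨⟨?_, ?_, ?_⟩, card_insert_of_notMem fun hC𝒞 => ?_⟩
  · simpa only [forall_mem_insert] using ⟨hC, h.1⟩
  · simp only [mem_insert]
    rintro D (rfl | hD) E (rfl | hE) hDE
    exacts [absurd rfl hDE, hdisj E hE, (hdisj D hD).symm, h.2.1 D hD E hE hDE]
  · rw [biUnion_insert, h.2.2, id, union_sdiff_of_subset hCA]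
  · exact hC.1.ne_empty (disjoint_self.1 (hdisj C hC𝒞))

theorem exists_isCircuitPartition {A : Finset V} (h0 : (0 : V) ∉ A) (hA : ∑ x ∈ A, x = 0) :
    ∃ 𝒞, IsCircuitPartition A 𝒞 := by
  induction A using Finset.strongInduction with
  | H A ih =>
    obtain rfl | hne := A.eq_empty_or_nonempty
    · exact ⟨∅, by simp [IsCircuitPartition]⟩
    obtain ⟨C, hCA, hC⟩ := exists_isCircuit_subset h0 hne hA
    obtain ⟨𝒞, h𝒞⟩ := ih (A \ C) (sdiff_ssubset hCA hC.1) (fun h => h0 (mem_sdiff.1 h).1)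
      (hC.sum_sdiff hCA ▸ hA)
    exact ⟨insert C 𝒞, (h𝒞.insert_sdiff hC hCA).1⟩

end Circuits

section BinaryLinearAlgebra

variable {V : Type*} [AddCommGroup V] [Module (ZMod 2) V]

theorem LinearIndepOn.eq_of_sum_eq {B S T : Finset V}
    (hB : LinearIndepOn (ZMod 2) id (B : Set V)) (hS : S ⊆ B) (hT : T ⊆ B)
    (h : ∑ x ∈ S, x = ∑ x ∈ T, x) : S = T := by
  classical
  have key := linearIndepOn_finset_iff.1 hB
    (fun b => (if b ∈ S then 1 else 0) - if b ∈ T then 1 else 0) (by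
      simp only [sub_smul, ite_smul, one_smul, zero_smul, sum_sub_distrib, sum_ite_mem,
        inter_eq_right.2 hS, inter_eq_right.2 hT, id, h, sub_self])
  ext b
  by_cases hb : b ∈ B
  · have := key b hb
    by_cases hbS : b ∈ S <;> by_cases hbT : b ∈ T <;> simp_all
  · exact iff_of_false (fun h => hb (hS h)) (fun h => hb (hT h))

theorem LinearIndepOn.sum_ne_zero {B S : Finset V}
    (hB : LinearIndepOn (ZMod 2) id (B : Set V)) (hS : S ⊆ B) (hne : S.Nonempty) :
    ∑ x ∈ S, x ≠ 0 := fun h =>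
  hne.ne_empty (hB.eq_of_sum_eq hS (empty_subset B) (by rw [h, sum_empty]))

theorem exists_subset_sum_eq_of_mem_span {B : Finset V} {x : V}
    (hx : x ∈ Submodule.span (ZMod 2) (B : Set V)) : ∃ S ⊆ B, ∑ y ∈ S, y = x := by
  obtain ⟨f, -, rfl⟩ := Submodule.mem_span_finset.1 hx
  refine ⟨B.filter (f · = 1), filter_subset _ _, ?_⟩
  rw [sum_filter]
  refine sum_congr rfl fun b _ => ?_
  rcases (by decide : ∀ c : ZMod 2, c = 0 ∨ c = 1) (f b) with h | h <;> simp [h]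

variable [DecidableEq V]

theorem isCircuit_insert_sum {B S : Finset V} (hB : LinearIndepOn (ZMod 2) id (B : Set V))
    (hSB : S ⊆ B) (hS : S.Nonempty) (hxS : ∑ y ∈ S, y ∉ S) :
    IsCircuit (insert (∑ y ∈ S, y) S) := by
  set x := ∑ y ∈ S, y
  have h0B : (0 : V) ∉ B := fun h =>
    hB.sum_ne_zero (singleton_subset_iff.2 h) (singleton_nonempty 0) (sum_singleton id 0)
  refine ⟨insert_nonempty x S, ?_, by rw [sum_insert hxS, ZModModule.add_self], ?_⟩
  · rw [mem_insert]
    rintro (h | h)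
    exacts [hB.sum_ne_zero hSB hS h.symm, h0B (hSB h)]
  · intro D hD hDne hD0
    by_cases hxD : x ∈ D
    · have hsum : ∑ y ∈ D.erase x, y = x := by
        rw [← add_sum_erase D (fun y => y) hxD] at hD0
        exact (eq_neg_of_add_eq_zero_right hD0).trans (ZModModule.neg_eq_self x)
      rw [← insert_erase hxD,
        hB.eq_of_sum_eq (subset_insert_iff.1 hD |>.trans hSB) hSB hsum]
    · exact absurd hD0 (hB.sum_ne_zero ((subset_insert_iff_of_notMem hxD).1 hD |>.trans hSB) hDne)

theorem exists_isCircuit_subset_add_two_le_card {A : Finset V} {r m : ℕ}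
    (hm : 1 ≤ m) (hr : ∀ s ⊆ A, LinearIndepOn (ZMod 2) id (s : Set V) → s.card ≤ r)
    (hA : ∑ i ∈ range (m + 1), r.choose i < A.card) :
    ∃ C ⊆ A, IsCircuit C ∧ m + 2 ≤ C.card := by
  obtain ⟨b, hbA, -, hAb, hB⟩ := exists_linearIndepOn_id_extension
    (linearIndepOn_empty (ZMod 2) id) (Set.empty_subset (A : Set V))
  obtain ⟨B, rfl⟩ := (A.finite_toSet.subset hbA).exists_finset_coe
  have hBA : B ⊆ A := coe_subset.1 hbA
  by_contra! hsmall
  set F := (range (m + 1)).biUnion (B.powersetCard ·)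
  have hAF : A ⊆ F.image fun S => ∑ y ∈ S, y := by
    intro x hx
    obtain ⟨S, hSB, rfl⟩ := exists_subset_sum_eq_of_mem_span (hAb hx)
    refine mem_image.2 ⟨S, ?_, rfl⟩
    simp only [F, mem_biUnion, mem_range, mem_powersetCard]
    refine ⟨S.card, ?_, hSB, rfl⟩
    by_contra! hbig
    have hxS : ∑ y ∈ S, y ∉ S := fun h => by
      have := hB.eq_of_sum_eq hSB (singleton_subset_iff.2 (hSB h)) (sum_singleton id _).symm
      rw [this, card_singleton] at hbig
      omega
    have hC := hsmall _ (insert_subset hx (hSB.trans hBA))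
      (isCircuit_insert_sum hB hSB (card_pos.1 (by omega)) hxS)
    rw [card_insert_of_notMem hxS] at hC
    omega
  have hF : (F.image fun S => ∑ y ∈ S, y).card ≤ ∑ i ∈ range (m + 1), r.choose i :=
    calc _ ≤ F.card := card_image_le
      _ ≤ ∑ i ∈ range (m + 1), (B.powersetCard i).card := card_biUnion_le
      _ ≤ _ := sum_le_sum fun i _ => by
        rw [card_powersetCard]; exact Nat.choose_le_choose i (hr B hBA hB)
  exact (card_le_card hAF).trans hF |>.not_gt hA

theorem exists_isCircuitPartition_card_le {A : Finset V} (h0 : (0 : V) ∉ A)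
    (hA : ∑ x ∈ A, x = 0) {r m : ℕ} (hm : 1 ≤ m)
    (hr : ∀ s ⊆ A, LinearIndepOn (ZMod 2) id (s : Set V) → s.card ≤ r) :
    ∃ 𝒞, IsCircuitPartition A 𝒞 ∧
      (m + 2) * 𝒞.card ≤ A.card + (m + 2) * ∑ i ∈ range (m + 1), r.choose i := by
  induction A using Finset.strongInduction with
  | H A ih =>
    by_cases hsmall : A.card ≤ ∑ i ∈ range (m + 1), r.choose i
    · obtain ⟨𝒞, h𝒞⟩ := exists_isCircuitPartition h0 hA
      exact ⟨𝒞, h𝒞, by nlinarith [h𝒞.card_le]⟩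
    obtain ⟨C, hCA, hC, hCcard⟩ :=
      exists_isCircuit_subset_add_two_le_card hm hr (not_le.1 hsmall)
    obtain ⟨𝒞, h𝒞, hcard⟩ := ih (A \ C) (sdiff_ssubset hCA hC.1)
      (fun h => h0 (mem_sdiff.1 h).1) (hC.sum_sdiff hCA ▸ hA)
      (fun s hs => hr s (hs.trans sdiff_subset))
    obtain ⟨hpart, hcard'⟩ := h𝒞.insert_sdiff hC hCA
    refine ⟨insert C 𝒞, hpart, ?_⟩
    have := card_sdiff_add_card_eq_card hCA
    rw [hcard', mul_add, mul_one]
    linarith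

end BinaryLinearAlgebra

theorem card_le_rk {n : ℕ} {M s : Finset (Fin n → ZMod 2)} (hs : s ⊆ M)
    (hind : LinearIndepOn (ZMod 2) id (s : Set (Fin n → ZMod 2))) : s.card ≤ rk M :=
  le_csSup ⟨M.card, fun _ ⟨_, ht, hk, _⟩ => hk ▸ card_le_card ht⟩ ⟨s, hs, rfl, hind⟩

section Estimates

open Filter

theorem sum_range_choose_mul_pow_le {r m : ℕ} (hmr : m ≤ r) {x : ℝ} (hx0 : 0 ≤ x)
    (hx1 : x ≤ 1) : (∑ i ∈ range (m + 1), (r.choose i : ℝ)) * x ^ m ≤ (1 + x) ^ r :=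
  calc (∑ i ∈ range (m + 1), (r.choose i : ℝ)) * x ^ m
      ≤ ∑ i ∈ range (m + 1), x ^ i * 1 ^ (r - i) * r.choose i := by
        rw [sum_mul]
        refine sum_le_sum fun i hi => ?_
        rw [one_pow, mul_one, mul_comm]
        exact mul_le_mul_of_nonneg_right
          (pow_le_pow_of_le_one hx0 hx1 (Nat.lt_succ_iff.1 (mem_range.1 hi))) (Nat.cast_nonneg _)
    _ ≤ ∑ i ∈ range (r + 1), x ^ i * 1 ^ (r - i) * r.choose i :=
        sum_le_sum_of_subset_of_nonneg (range_subset_range.2 (by omega))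
          fun _ _ _ => by positivity
    _ = (1 + x) ^ r := by rw [add_comm 1 x, add_pow]

theorem one_add_le_two_rpow_mul_rpow {γ : ℝ} (hγ0 : 0 < γ) (hγ1 : γ ≤ 1 / 10) :
    1 + (1 - 2 * γ) ≤ 2 ^ (1 - γ ^ 2 / 4) * (1 - 2 * γ) ^ (1 / 2 - γ) := by
  set x := 1 - 2 * γ
  have hx0 : 0 < x := by linarith
  have hsqrt : (1 - γ) * (1 + γ ^ 2 / 4) ≤ (1 + 2 * γ ^ 2) * √x := by
    have hγ3 : γ ^ 3 ≤ γ ^ 2 / 10 := by nlinarith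
    have hγ4 : γ ^ 4 ≤ γ ^ 2 / 100 := by nlinarith
    have hγ5 : γ ^ 5 ≤ γ ^ 2 / 1000 := by nlinarith
    have hγ6 : γ ^ 6 ≤ γ ^ 2 / 10000 := by nlinarith [pow_pos hγ0 3]
    rw [← Real.sqrt_sq (by nlinarith : 0 ≤ (1 - γ) * (1 + γ ^ 2 / 4)),
      ← Real.sqrt_sq (by positivity : 0 ≤ 1 + 2 * γ ^ 2), ← Real.sqrt_mul (sq_nonneg _)]
    exact Real.sqrt_le_sqrt (by nlinarith)
  have htwo : 2 / (1 + γ ^ 2 / 4) ≤ 2 ^ (1 - γ ^ 2 / 4) := by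
    have := rpow_one_add_le_one_add_mul_self (s := 1) (by norm_num) (p := γ ^ 2 / 4)
      (by positivity) (by nlinarith)
    rw [Real.rpow_sub two_pos, Real.rpow_one]
    norm_num at this
    gcongr
  have hneg : 1 + 2 * γ ^ 2 ≤ x ^ (-γ) := by
    rw [Real.rpow_def_of_pos hx0]
    nlinarith [Real.add_one_le_exp (Real.log x * -γ), Real.log_le_sub_one_of_pos hx0]
  calc 1 + x = 2 / (1 + γ ^ 2 / 4) * ((1 - γ) * (1 + γ ^ 2 / 4)) := by
        field_simp; ring
    _ ≤ 2 ^ (1 - γ ^ 2 / 4) * ((1 + 2 * γ ^ 2) * √x) := by gcongr; nlinarith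
    _ ≤ 2 ^ (1 - γ ^ 2 / 4) * (x ^ (-γ) * √x) := by gcongr
    _ = 2 ^ (1 - γ ^ 2 / 4) * x ^ (1 / 2 - γ) := by
        rw [show 1 / 2 - γ = -γ + 1 / 2 by ring, Real.rpow_add hx0, Real.sqrt_eq_rpow]

theorem sum_range_choose_le_two_rpow {γ : ℝ} (hγ0 : 0 < γ) (hγ1 : γ ≤ 1 / 10) {r m : ℕ}
    (hm : (m : ℝ) ≤ (1 / 2 - γ) * r) :
    ∑ i ∈ range (m + 1), (r.choose i : ℝ) ≤ 2 ^ ((1 - γ ^ 2 / 4) * r) := by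
  set x := 1 - 2 * γ
  have hx0 : 0 < x := by linarith
  have hmr : m ≤ r := by
    have : (m : ℝ) ≤ r := hm.trans (by nlinarith [r.cast_nonneg (α := ℝ)])
    exact_mod_cast this
  have hxm : x ^ ((1 / 2 - γ) * r) ≤ x ^ m := by
    rw [← Real.rpow_natCast]
    exact Real.rpow_le_rpow_of_exponent_ge hx0 (by linarith) hm
  calc ∑ i ∈ range (m + 1), (r.choose i : ℝ)
      = (∑ i ∈ range (m + 1), (r.choose i : ℝ)) * x ^ m / x ^ m := by field_simp
    _ ≤ (1 + x) ^ r / x ^ m := by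
        gcongr; exact sum_range_choose_mul_pow_le hmr hx0.le (by linarith)
    _ ≤ (2 ^ (1 - γ ^ 2 / 4) * x ^ (1 / 2 - γ)) ^ r / x ^ m := by
        gcongr; exact one_add_le_two_rpow_mul_rpow hγ0 hγ1
    _ = 2 ^ ((1 - γ ^ 2 / 4) * r) * (x ^ ((1 / 2 - γ) * r) / x ^ m) := by
        rw [mul_pow, ← Real.rpow_natCast, ← Real.rpow_natCast (x ^ _), ← Real.rpow_mul two_pos.le,
          ← Real.rpow_mul hx0.le, mul_div_assoc]
    _ ≤ 2 ^ ((1 - γ ^ 2 / 4) * r) :=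
        mul_le_of_le_one_right (by positivity) (div_le_one_of_le₀ hxm (by positivity))

theorem add_one_mul_sum_range_choose_le {γ c N : ℝ} (hγ0 : 0 < γ) (hγ1 : γ ≤ 1 / 10)
    {r m : ℕ} (hm : (m : ℝ) ≤ (1 / 2 - γ) * r) (hr : (r : ℝ) + 1 ≤ c * 2 ^ (γ ^ 2 / 8 * r))
    (hN : (2 : ℝ) ^ ((1 - γ ^ 2 / 8) * r) ≤ N) :
    (r + 1) * ∑ i ∈ range (m + 1), (r.choose i : ℝ) ≤ c * N := by
  have hc : 0 < c := by
    by_contra! hc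
    nlinarith [Real.rpow_pos_of_pos two_pos (γ ^ 2 / 8 * r), r.cast_nonneg (α := ℝ)]
  calc (r + 1) * ∑ i ∈ range (m + 1), (r.choose i : ℝ)
      ≤ c * 2 ^ (γ ^ 2 / 8 * r) * 2 ^ ((1 - γ ^ 2 / 4) * r) := by
        gcongr; exact sum_range_choose_le_two_rpow hγ0 hγ1 hm
    _ = c * 2 ^ ((1 - γ ^ 2 / 8) * r) := by rw [mul_assoc, ← Real.rpow_add two_pos]; ring_nf
    _ ≤ c * N := by gcongr

theorem eventually_add_one_le_mul_two_rpow {c δ : ℝ} (hc : 0 < c) (hδ : 0 < δ) :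
    ∀ᶠ r : ℕ in atTop, (r : ℝ) + 1 ≤ c * 2 ^ (δ * r) := by
  have hb : 1 < (2 : ℝ) ^ δ := Real.one_lt_rpow (by norm_num) hδ
  filter_upwards [(isLittleO_coe_const_pow_of_one_lt (R := ℝ) hb).bound (half_pos hc),
    eventually_ge_atTop 1] with r hr hr1
  rw [Real.norm_natCast, Real.norm_of_nonneg (by positivity), ← Real.rpow_natCast,
    ← Real.rpow_mul (by norm_num)] at hr
  have : (1 : ℝ) ≤ r := by exact_mod_cast hr1
  linarith

end Estimates

/-- Dense Eulerian binary matroids can be partitioned into at most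
`(2 + ε)|M|/(rank M + 1)` circuits. -/
theorem dense_circuit_decomposition (ε : ℝ) (hε : 0 < ε) :
    ∃ (r₀ : ℕ) (δ : ℝ), 0 < δ ∧
      ∀ (n : ℕ) (M : Finset (Fin n → ZMod 2)),
        (0 : Fin n → ZMod 2) ∉ M → ∑ x ∈ M, x = 0 →
        r₀ ≤ rk M → (2 : ℝ) ^ ((1 - δ) * rk M) ≤ M.card →
        ∃ 𝒞 : Finset (Finset (Fin n → ZMod 2)), IsCircuitPartition M 𝒞 ∧
          (𝒞.card : ℝ) ≤ (2 + ε) * M.card / (rk M + 1) := by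
  obtain ⟨γ, hγ0, hγ1, hγε⟩ : ∃ γ : ℝ, 0 < γ ∧ γ ≤ 1 / 10 ∧ 1 ≤ (2 + ε / 2) * (1 / 2 - γ) :=
    ⟨min (ε / 20) (1 / 10), by positivity, min_le_right _ _,
      by nlinarith [min_le_left (ε / 20) (1 / 10), min_le_right (ε / 20) (1 / 10)]⟩
  obtain ⟨r₀, hr₀⟩ := Filter.eventually_atTop.1 <|
    (eventually_add_one_le_mul_two_rpow (half_pos hε) (by positivity : 0 < γ ^ 2 / 8)).and <|
      (tendsto_natCast_atTop_atTop.const_mul_atTop (by linarith : 0 < 1 / 2 - γ)).eventually_ge_atTop 1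
  refine ⟨r₀, γ ^ 2 / 8, by positivity, fun n M h0 hM hr hN => ?_⟩
  obtain ⟨hgrowth, hm1⟩ := hr₀ (rk M) hr
  set r := rk M
  set m := ⌊(1 / 2 - γ) * r⌋₊
  obtain ⟨𝒞, h𝒞, hcard⟩ := exists_isCircuitPartition_card_le (m := m) h0 hM
    (Nat.le_floor (by exact_mod_cast hm1)) fun _ => card_le_rk
  refine ⟨𝒞, h𝒞, ?_⟩
  set Φ := ∑ i ∈ range (m + 1), (r.choose i : ℝ)
  have hcard' : (m + 2 : ℝ) * 𝒞.card ≤ M.card + (m + 2) * Φ := by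
    simp only [Φ]; exact_mod_cast hcard
  have hrm : (r + 1 : ℝ) ≤ (2 + ε / 2) * (m + 2) := by
    have hm : (1 / 2 - γ) * r < m + 1 := Nat.lt_floor_add_one _
    nlinarith [mul_le_mul_of_nonneg_right hγε r.cast_nonneg]
  have hΦ : (r + 1) * Φ ≤ ε / 2 * M.card :=
    add_one_mul_sum_range_choose_le hγ0 hγ1 (Nat.floor_le (by positivity)) hgrowth hN
  calc (𝒞.card : ℝ) ≤ M.card / (m + 2) + Φ := by
        rw [div_add' _ _ _ (by positivity), le_div_iff₀ (by positivity)]; linarith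
    _ ≤ (2 + ε / 2) * M.card / (r + 1) + ε / 2 * M.card / (r + 1) := by
        refine add_le_add ?_ ((le_div_iff₀ (by positivity)).2 (by linarith))
        rw [div_le_div_iff₀ (by positivity) (by positivity)]
        nlinarith [mul_le_mul_of_nonneg_left hrm (M.card.cast_nonneg (α := ℝ))]
    _ = (2 + ε) * M.card / (r + 1) := by ring
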